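/- Let V be the collector matrix of a surjection K : Fin n → Fin l, let Q be an n×n real matrix and Q̂ an l×l real matrix with Q·V = V·Q̂. If the row vector φ ∈ ℝⁿ satisfies φ·Q = 0 and Σ_{i} φ_i = 1, then the aggregated row vector φ·V ∈ ℝˡ satisfies (φ·V)·Q̂ = 0 and Σ_{r} (φ·V)_r = 1; that is, the aggregated steady-state probability vector is a solution of the quotient linear system. -/
import Mathlib


/-- The collector matrix of a partition map `K : Fin n → Fin l`:
`V_{ir} = 1` if `K i = r` and `0` otherwise. -/
def collector {n l : ℕ} (K : Fin n → Fin l) : Matrix (Fin n) (Fin l) ℝ :=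
  Matrix.of fun i r => if K i = r then 1 else 0

/-- The distributor matrix of a partition map `K : Fin n → Fin l`:
`W_{ri} = 1/|K⁻¹(r)|` if `K i = r` and `0` otherwise. -/
noncomputable def distributor {n l : ℕ} (K : Fin n → Fin l) : Matrix (Fin l) (Fin n) ℝ :=
  Matrix.of fun r i =>
    if K i = r then (1 : ℝ) / (Finset.univ.filter fun j => K j = r).card else 0

/-- If `Q·V = V·Q̂` for the collector matrix `V` of a surjection `K`, and the row vector `φ`
satisfies `φ·Q = 0` and `Σᵢ φᵢ = 1`, then the aggregated row vector `φ·V` satisfies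
`(φ·V)·Q̂ = 0` and `Σ_r (φ·V)_r = 1`. -/
theorem aggregated_steady_state_solves_quotient {n l : ℕ}
    (K : Fin n → Fin l) (hK : Function.Surjective K)
    (Q : Matrix (Fin n) (Fin n) ℝ) (Qh : Matrix (Fin l) (Fin l) ℝ)
    (hQV : Q * collector K = collector K * Qh)
    (φ : Fin n → ℝ) (h1 : Matrix.vecMul φ Q = 0) (h2 : ∑ i, φ i = 1) :
    Matrix.vecMul (Matrix.vecMul φ (collector K)) Qh = 0 ∧
      ∑ r, Matrix.vecMul φ (collector K) r = 1 := by
  constructor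
  · rw [Matrix.vecMul_vecMul, ← hQV, ← Matrix.vecMul_vecMul, h1, Matrix.zero_vecMul]
  · have : ∑ r, Matrix.vecMul φ (collector K) r
        = ∑ i, ∑ r, φ i * (if K i = r then (1:ℝ) else 0) := by
      rw [Finset.sum_comm]
      simp [Matrix.vecMul, dotProduct, collector]
    rw [this]
    have : ∀ i : Fin n, ∑ r, φ i * (if K i = r then (1:ℝ) else 0) = φ i := fun i => by simp
    simp only [this, h2]
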